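/- arXiv:math/0605106 — 3 statements merged into one kernel-verified Lean document; each statement's English description precedes it below -/
import Mathlib

section
/- Define the Cremona action on a type (δ; μ₁,…,μ_r) ∈ ℤ^{r+1} by sending it to (δ+2γ; μ₁+γ, μ₂+γ, μ₃+γ, μ₄+γ, μ₅,…,μ_r) where γ = δ − (μ₁+μ₂+μ₃+μ₄). Then the bilinear form ⟨C, C'⟩ = δδ' − 2∑ᵢ μᵢμᵢ' is invariant under applying this action simultaneously to C and C'. -/
open Finset

/-- Type of a curve: (degree, multiplicities). -/
abbrev CurveType (r : ℕ) := ℤ × (Fin r → ℤ)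

/-- Cremona action based on the four (distinct) indices `i 0, i 1, i 2, i 3`. -/
def cremona {r : ℕ} (i : Fin 4 → Fin r) (C : CurveType r) : CurveType r :=
  (C.1 + 2 * (C.1 - ∑ j, C.2 (i j)),
   fun k => if ∃ j, i j = k then C.2 k + (C.1 - ∑ j, C.2 (i j)) else C.2 k)

/-- The pairing ⟨C,C'⟩ = δδ' − 2∑ μᵢμᵢ'. -/
def pairing {r : ℕ} (C C' : CurveType r) : ℤ :=
  C.1 * C'.1 - 2 * ∑ k, C.2 k * C'.2 k

/-- The type of a line through the first two points. -/
def lineType (r : ℕ) : CurveType r :=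
  (1, fun k => if k.val < 2 then 1 else 0)

lemma sum_ite_exists {r : ℕ} (i : Fin 4 → Fin r) (hi : Function.Injective i)
    (g : Fin r → ℤ) :
    ∑ k, (if ∃ j, i j = k then g k else 0) = ∑ j, g (i j) := by
  rw [← Finset.sum_filter]
  have : (Finset.univ.filter (fun k => ∃ j, i j = k)) = Finset.univ.image i := by
    ext k; simp [eq_comm]
  rw [this, Finset.sum_image (fun a _ b _ h => hi h)]

/-- The pairing is invariant under applying the Cremona action simultaneously
to both types. -/
theorem pairing_cremona_invariant {r : ℕ} (i : Fin 4 → Fin r)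
    (hi : Function.Injective i) (C C' : CurveType r) :
    pairing (cremona i C) (cremona i C') = pairing C C' := by
  obtain ⟨d, m⟩ := C
  obtain ⟨d', m'⟩ := C'
  set g : ℤ := d - ∑ j, m (i j) with hg
  set g' : ℤ := d' - ∑ j, m' (i j) with hg'
  unfold pairing cremona
  simp only
  have key : ∑ k, (if ∃ j, i j = k then m k + g else m k) *
      (if ∃ j, i j = k then m' k + g' else m' k)
      = ∑ k, m k * m' k +
        ∑ k, (if ∃ j, i j = k then g * m' k + g' * m k + g * g' else 0) := by
    rw [← Finset.sum_add_distrib]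
    apply Finset.sum_congr rfl
    intro k _
    by_cases h : ∃ j, i j = k <;> simp [h] <;> ring
  rw [key, sum_ite_exists i hi]
  have e1 : ∑ j, (g * m' (i j) + g' * m (i j) + g * g') =
      g * ∑ j, m' (i j) + g' * ∑ j, m (i j) + 4 * (g * g') := by
    rw [Finset.sum_add_distrib, Finset.sum_add_distrib, ← Finset.mul_sum,
      ← Finset.mul_sum]
    simp only [Finset.sum_const, Finset.card_univ, Fintype.card_fin, nsmul_eq_mul]; ring
  rw [e1]
  have h1 : ∑ j, m (i j) = d - g := by rw [hg]; ring
  have h2 : ∑ j, m' (i j) = d' - g' := by rw [hg']; ring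
  rw [h1, h2]; ring
end

section
/- Let δ, μ₁,…,μ_r be nonnegative integers with μ₁ ≥ μ₂ ≥ … ≥ μ_r, satisfying δ² − 2∑ᵢμᵢ² = −3 and 4δ − 2∑ᵢμᵢ = 0, and suppose δ > 2μ₁ and (δ; μ₁,…,μ_r) is not the line type (1;1,1,0,…,0). Then δ < μ₁ + μ₂ + μ₃ + μ₄. -/
open Finset

/-- A numerically elementary (−1)-type with sorted nonnegative multiplicities,
δ > 2μ₁, which is not the line type, satisfies δ < μ₁+μ₂+μ₃+μ₄. -/
theorem deg_lt_sum_four {r : ℕ} (hr : 4 ≤ r) (δ : ℤ) (μ : Fin r → ℤ)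
    (hanti : Antitone μ) (hpos : ∀ i, 0 ≤ μ i)
    (hCC : δ ^ 2 - 2 * ∑ i, (μ i) ^ 2 = -3)
    (hCK : 4 * δ - 2 * ∑ i, μ i = 0)
    (hdeg : 2 * μ ⟨0, by omega⟩ < δ)
    (hline : ¬ (δ = 1 ∧ ∀ i : Fin r, μ i = if i.val < 2 then 1 else 0)) :
    δ < μ ⟨0, by omega⟩ + μ ⟨1, by omega⟩ + μ ⟨2, by omega⟩ + μ ⟨3, by omega⟩ := by
  set i0 : Fin r := ⟨0, by omega⟩
  set i1 : Fin r := ⟨1, by omega⟩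
  set i2 : Fin r := ⟨2, by omega⟩
  set i3 : Fin r := ⟨3, by omega⟩
  set a := μ i0 with ha
  set b := μ i1 with hb
  set c := μ i2 with hc
  set d := μ i3 with hd
  have hab : b ≤ a := hanti (by simp [i0, i1, Fin.le_def])
  have hbc : c ≤ b := hanti (by simp [i1, i2, Fin.le_def])
  have hcd : d ≤ c := hanti (by simp [i2, i3, Fin.le_def])
  have hd0 : 0 ≤ d := hpos i3
  -- key inequality: ∑ μᵢ(μᵢ - d) ≤ a(a-d) + b(b-d) + c(c-d) + d(d-d)
  have hsub : ({i0, i1, i2, i3} : Finset (Fin r)) ⊆ univ := subset_univ _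
  have hkey : ∑ i, (μ i ^ 2 - d * μ i) ≤
      (a ^ 2 - d * a) + (b ^ 2 - d * b) + (c ^ 2 - d * c) + (d ^ 2 - d * d) := by
    have hsplit := Finset.sum_sdiff (f := fun i => μ i ^ 2 - d * μ i) hsub
    have hrest : ∑ i ∈ univ \ ({i0, i1, i2, i3} : Finset (Fin r)),
        (μ i ^ 2 - d * μ i) ≤ 0 := by
      apply Finset.sum_nonpos
      intro i hi
      simp only [mem_sdiff, mem_insert, mem_singleton] at hi
      have hi3 : i3 ≤ i := by
        rw [Fin.le_def]
        have h0 : i ≠ i0 := fun h => hi.2 (by simp [h])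
        have h1 : i ≠ i1 := fun h => hi.2 (by simp [h])
        have h2 : i ≠ i2 := fun h => hi.2 (by simp [h])
        have h3 : i ≠ i3 := fun h => hi.2 (by simp [h])
        have := Fin.val_ne_of_ne h0
        have := Fin.val_ne_of_ne h1
        have := Fin.val_ne_of_ne h2
        have := Fin.val_ne_of_ne h3
        simp only [i0, i1, i2, i3] at *
        omega
      have hmu : μ i ≤ d := hanti hi3
      nlinarith [hpos i]
    have hfour : ∑ i ∈ ({i0, i1, i2, i3} : Finset (Fin r)),
        (μ i ^ 2 - d * μ i) =
        (a ^ 2 - d * a) + (b ^ 2 - d * b) + (c ^ 2 - d * c) + (d ^ 2 - d * d) := by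
      have h01 : i0 ≠ i1 := by simp [i0, i1, Fin.ext_iff]
      have h02 : i0 ≠ i2 := by simp [i0, i2, Fin.ext_iff]
      have h03 : i0 ≠ i3 := by simp [i0, i3, Fin.ext_iff]
      have h12 : i1 ≠ i2 := by simp [i1, i2, Fin.ext_iff]
      have h13 : i1 ≠ i3 := by simp [i1, i3, Fin.ext_iff]
      have h23 : i2 ≠ i3 := by simp [i2, i3, Fin.ext_iff]
      rw [Finset.sum_insert (by simp [h01, h02, h03]),
          Finset.sum_insert (by simp [h12, h13]),
          Finset.sum_insert (by simp [h23]),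
          Finset.sum_singleton]
      ring
    calc ∑ i, (μ i ^ 2 - d * μ i)
        = (∑ i ∈ univ \ ({i0, i1, i2, i3} : Finset (Fin r)), (μ i ^ 2 - d * μ i))
          + ∑ i ∈ ({i0, i1, i2, i3} : Finset (Fin r)), (μ i ^ 2 - d * μ i) :=
          hsplit.symm
      _ ≤ (a ^ 2 - d * a) + (b ^ 2 - d * b) + (c ^ 2 - d * c) + (d ^ 2 - d * d) := by
          rw [hfour]; linarith
  have hsumS : ∑ i, μ i = 2 * δ := by linarith
  have hsumQ : 2 * ∑ i, (μ i) ^ 2 = δ ^ 2 + 3 := by linarith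
  have hexp : ∑ i, (μ i ^ 2 - d * μ i) = (∑ i, (μ i) ^ 2) - d * ∑ i, μ i := by
    rw [Finset.sum_sub_distrib, Finset.mul_sum]
  rw [hexp, hsumS] at hkey
  by_contra hcon
  push_neg at hcon
  have h3 : 2 * a + 1 ≤ δ := by linarith
  have h1 : δ ^ 2 + 3 - 4 * d * δ ≤
      2 * (a ^ 2 + b ^ 2 + c ^ 2 + d ^ 2) - 2 * d * (a + b + c + d) := by linarith
  nlinarith [sq_nonneg (δ - a - b - c - d), sq_nonneg (b - c),
    mul_nonneg (sub_nonneg.2 hcd) (sub_nonneg.2 hab),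
    mul_nonneg (sub_nonneg.2 hcon) (by linarith : (0:ℤ) ≤ δ - 2 * a - 1),
    mul_nonneg hd0 (sub_nonneg.2 hcon),
    mul_nonneg hd0 (by linarith : (0:ℤ) ≤ δ - 2 * a - 1),
    mul_nonneg (sub_nonneg.2 hab) (sub_nonneg.2 hbc)]
end

section
/- On the Picard lattice of a smooth quadric blown up at 4 points, with basis h₁, h₂, e₁, e₂, e₃, e₄ and intersection form h₁·h₂ = 1, h₁² = h₂² = 0, eᵢ·eⱼ = −δᵢⱼ, eᵢ·hⱼ = 0, the linear map sending h₁ ↦ 2h₁+h₂−∑eⱼ, h₂ ↦ h₁+2h₂−∑eⱼ, and eⱼ ↦ h₁+h₂−∑_{k≠j}e_k is an isometry of the lattice. -/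
open Finset

/-- The intersection form on ℤ⁶ = Pic of a quadric blown up at 4 points:
basis h₁, h₂ (indices 0,1) and e₁,…,e₄ (indices 2,…,5), with
h₁·h₂ = 1, h₁² = h₂² = 0, eᵢ·eⱼ = −δᵢⱼ, eᵢ·hⱼ = 0. -/
def quadForm (v w : Fin 6 → ℤ) : ℤ :=
  v 0 * w 1 + v 1 * w 0 - (v 2 * w 2 + v 3 * w 3 + v 4 * w 4 + v 5 * w 5)

/-- The Cremona map on Pic: h₁ ↦ 2h₁+h₂−∑eⱼ, h₂ ↦ h₁+2h₂−∑eⱼ,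
eⱼ ↦ h₁+h₂−∑_{k≠j}e_k (written on coordinates). -/
def cremonaPic (v : Fin 6 → ℤ) : Fin 6 → ℤ :=
  fun i =>
    if i = 0 then 2 * v 0 + v 1 + (v 2 + v 3 + v 4 + v 5)
    else if i = 1 then v 0 + 2 * v 1 + (v 2 + v 3 + v 4 + v 5)
    else -(v 0) - v 1 - (v 2 + v 3 + v 4 + v 5) + v i

lemma cremonaPic_invol : ∀ v, cremonaPic (cremonaPic v) = v := by
  intro v
  funext i
  fin_cases i <;> simp [cremonaPic] <;> ring

/-- The Cremona map on the Picard lattice of a blown-up quadric is an isometry: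
it is bijective and preserves the intersection form. -/
theorem cremonaPic_isometry :
    Function.Bijective cremonaPic ∧
      ∀ v w : Fin 6 → ℤ, quadForm (cremonaPic v) (cremonaPic w) = quadForm v w := by
  constructor
  · exact Function.Involutive.bijective cremonaPic_invol
  · intro v w
    simp [quadForm, cremonaPic]
    ring
end
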